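/- For n ≥ 2, 1 ≤ k ≤ n, weights w_1 ≥ w_2 ≥ … ≥ w_k ≥ 0, the expected utility of an honest player, (Σ_{j=1}^{k} w_j (n-j+1))/(n(n+1)), is at least the expected utility of a dishonest (independent-uniform) player, (1/(2n)) Σ_{j=1}^{k} w_j. -/
import Mathlib

lemma fedor_key (n : ℕ) (w : ℕ → ℝ) :
    ∀ k, k ≤ n →
    (∀ i j, 1 ≤ i → i ≤ j → j ≤ k → w j ≤ w i) →
    (∀ j, 1 ≤ j → j ≤ k → 0 ≤ w j) →
    w k * (k * ((n : ℝ) - k)) ≤ ∑ j ∈ Finset.Icc 1 k, w j * ((n : ℝ) + 1 - 2 * j) := by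
  intro k
  induction k with
  | zero => intro _ _ _; simp
  | succ k ih =>
    intro hk hmono hnonneg
    have hk' : k ≤ n := Nat.le_of_succ_le hk
    have ih' := ih hk' (fun i j hi hij hjk => hmono i j hi hij (Nat.le_succ_of_le hjk))
      (fun j hj hjk => hnonneg j hj (Nat.le_succ_of_le hjk))
    rw [Finset.sum_Icc_succ_top (by omega : 1 ≤ k + 1)]
    have hwk : w (k + 1) ≤ w k ∨ k = 0 := by
      rcases Nat.eq_zero_or_pos k with h | h
      · exact Or.inr h
      · exact Or.inl (hmono k (k+1) h (Nat.le_succ k) le_rfl)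
    have hSk : (0:ℝ) ≤ (k : ℝ) * ((n : ℝ) - k) := by
      have : (k:ℝ) ≤ n := by exact_mod_cast hk'
      have : (0:ℝ) ≤ (n:ℝ) - k := by linarith
      positivity
    have hstep : w (k + 1) * (k * ((n : ℝ) - k)) ≤ w k * (k * ((n : ℝ) - k)) := by
      rcases hwk with h | h
      · exact mul_le_mul_of_nonneg_right h hSk
      · simp [h]
    have : w (k+1) * ((k+1 : ℕ) * ((n:ℝ) - (k+1:ℕ)))
        = w (k+1) * (k * ((n:ℝ) - k)) + w (k+1) * ((n:ℝ) + 1 - 2 * (k+1:ℕ)) := by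
      push_cast; ring
    rw [this]
    push_cast
    linarith

theorem fedor_honest_ge_dishonest (n k : ℕ) (hn : 2 ≤ n) (hk1 : 1 ≤ k) (hkn : k ≤ n)
    (w : ℕ → ℝ)
    (hmono : ∀ i j, 1 ≤ i → i ≤ j → j ≤ k → w j ≤ w i)
    (hnonneg : ∀ j, 1 ≤ j → j ≤ k → 0 ≤ w j) :
    (∑ j ∈ Finset.Icc 1 k, w j * ((n : ℝ) - j + 1)) / (n * (n + 1))
      ≥ (1 / (2 * n)) * ∑ j ∈ Finset.Icc 1 k, w j := by
  have hkey := fedor_key n w k hkn hmono hnonneg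
  have hwS : (0:ℝ) ≤ w k * (k * ((n : ℝ) - k)) := by
    have hw := hnonneg k hk1 le_rfl
    have hnk : (k:ℝ) ≤ n := by exact_mod_cast hkn
    have : (0:ℝ) ≤ (n:ℝ) - k := by linarith
    positivity
  have hsum : (0:ℝ) ≤ ∑ j ∈ Finset.Icc 1 k, w j * ((n : ℝ) + 1 - 2 * j) :=
    le_trans hwS hkey
  have hnpos : (0:ℝ) < n := by positivity
  have hnn : (0:ℝ) < (n:ℝ) * ((n:ℝ) + 1) := by positivity
  rw [ge_iff_le, ← sub_nonneg]
  have heq : (∑ j ∈ Finset.Icc 1 k, w j * ((n : ℝ) - j + 1)) / (n * (n + 1))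
      - (1 / (2 * n)) * ∑ j ∈ Finset.Icc 1 k, w j
      = (∑ j ∈ Finset.Icc 1 k, w j * ((n : ℝ) + 1 - 2 * j)) / (2 * n * (n + 1)) := by
    rw [Finset.mul_sum, Finset.sum_div, Finset.sum_div, ← Finset.sum_sub_distrib]
    congr 1
    funext j
    field_simp
    ring
  rw [heq]
  positivity
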